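/- Let G be a graph of diameter at most 2 with edges e₁, …, e_m, and for each non-adjacent pair (v_i, v_j) define the path polynomial P_{i,j} = ∑_{e_a, e_b : v_i−e_a−e_b−v_j is a path in G} (x_a − x_b)² ∈ ℚ[x₁, …, x_m], with P_{i,j} = 1 for adjacent pairs. Let f_G = ∏_{i<j} P_{i,j}. Then rc(G) ≤ 2 if and only if there exists a point p ∈ ℚ^m with at most 2 distinct coordinates such that f_G(p) ≠ 0. -/

import Mathlib

/-- A walk is rainbow under edge coloring `c` if its edges have pairwise distinct colors. -/
def SimpleGraph.Walk.IsRainbow {V α : Type*} {G : SimpleGraph V} (c : Sym2 V → α)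
    {u v : V} (p : G.Walk u v) : Prop :=
  p.edges.Pairwise fun e f => c e ≠ c f

/-- A graph is rainbow connected under edge coloring `c` if every pair of vertices is joined
by a path all of whose edges have pairwise distinct colors. -/
def SimpleGraph.RainbowConnected {V α : Type*} (G : SimpleGraph V) (c : Sym2 V → α) : Prop :=
  ∀ u v : V, ∃ p : G.Walk u v, p.IsPath ∧ p.IsRainbow c

/-!
With two colours a rainbow path has at most two edges, so `G` is rainbow connected under a
2-colouring exactly when every non-adjacent pair has a common neighbour `w` whose two edges get
different colours. A sum of squares `∑ (p(iw) - p(wj))²` vanishes only if all its terms do, so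
`f_G(p) ≠ 0` expresses the same condition for the colouring `p`; and a `p` taking at most two
values on the edges is a 2-colouring up to renaming the values.
-/

lemma Finset.sum_sq_sub_ne_zero_iff {ι R : Type*} [Field R] [LinearOrder R]
    [IsStrictOrderedRing R] (s : Finset ι) (f g : ι → R) :
    ∑ i ∈ s, (f i - g i) ^ 2 ≠ 0 ↔ ∃ i ∈ s, f i ≠ g i := by
  simp [Finset.sum_eq_zero_iff_of_nonneg (fun _ _ => sq_nonneg _), sub_eq_zero]

lemma Set.ncard_image_comp_le {α β γ : Type*} [Finite α] (g : α → γ) (c : β → α)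
    (S : Set β) : ((g ∘ c) '' S).ncard ≤ Nat.card α := by
  rw [Set.image_comp]
  exact (Set.ncard_image_le (Set.toFinite _)).trans (Set.ncard_le_card _)

lemma Set.exists_eq_iff_eq_of_ncard_image_le_card {α β γ : Type*} [Fintype α] [Nonempty α]
    {p : β → γ} {S : Set β} (hS : S.Finite) (h : (p '' S).ncard ≤ Fintype.card α) :
    ∃ c : β → α, ∀ e ∈ S, ∀ f ∈ S, c e = c f ↔ p e = p f := by
  have := (hS.image p).fintype
  obtain ⟨ι⟩ := Function.Embedding.nonempty_of_card_le (α := p '' S) (β := α)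
    (by rwa [← Nat.card_coe_set_eq, Nat.card_eq_fintype_card] at h)
  classical
  refine ⟨fun e => if he : p e ∈ p '' S then ι ⟨p e, he⟩ else Classical.arbitrary α,
    fun e he f hf => ?_⟩
  simp [Set.mem_image_of_mem p he, Set.mem_image_of_mem p hf, ι.injective.eq_iff]

namespace SimpleGraph

variable {V α β : Type*} {G : SimpleGraph V}

def HasRainbowCommonNeighbors (G : SimpleGraph V) (c : Sym2 V → α) : Prop :=
  ∀ u v, u ≠ v → ¬G.Adj u v → ∃ w, G.Adj u w ∧ G.Adj w v ∧ c s(u, w) ≠ c s(w, v)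

namespace Walk

@[simp]
lemma isRainbow_nil (c : Sym2 V → α) {u : V} : (nil : G.Walk u u).IsRainbow c :=
  List.Pairwise.nil

@[simp]
lemma isRainbow_cons (c : Sym2 V → α) {u v w : V} (h : G.Adj u v) (p : G.Walk v w) :
    (cons h p).IsRainbow c ↔ (∀ e ∈ p.edges, c s(u, v) ≠ c e) ∧ p.IsRainbow c := by
  simp only [IsRainbow, edges_cons, List.pairwise_cons]

lemma IsRainbow.length_le_card [Fintype α] {c : Sym2 V → α} {u v : V} {p : G.Walk u v}
    (hp : p.IsRainbow c) : p.length ≤ Fintype.card α := by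
  simpa using List.Nodup.length_le_card (List.pairwise_map.2 hp)

end Walk

lemma HasRainbowCommonNeighbors.rainbowConnected {c : Sym2 V → α}
    (hc : G.HasRainbowCommonNeighbors c) : G.RainbowConnected c := by
  intro u v
  by_cases huv : u = v
  · subst huv
    exact ⟨.nil, .nil, Walk.isRainbow_nil c⟩
  by_cases hadj : G.Adj u v
  · exact ⟨hadj.toWalk, (Path.singleton hadj).2, by simp⟩
  obtain ⟨w, huw, hwv, hne⟩ := hc u v huv hadj
  refine ⟨.cons huw (.cons hwv .nil), ?_, by simpa using hne⟩
  simp [Walk.isPath_def, huw.ne, hwv.ne, huv]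

lemma RainbowConnected.hasRainbowCommonNeighbors [Fintype α] {c : Sym2 V → α}
    (hα : Fintype.card α ≤ 2) (hc : G.RainbowConnected c) : G.HasRainbowCommonNeighbors c := by
  intro u v huv hadj
  obtain ⟨p, -, hp⟩ := hc u v
  have hlen := hp.length_le_card.trans hα
  match p, hp, hlen with
  | .nil, _, _ => exact absurd rfl huv
  | .cons h .nil, _, _ => exact absurd h hadj
  | .cons huw (.cons hwv .nil), hp, _ => exact ⟨_, huw, hwv, by simpa using hp⟩
  | .cons _ (.cons _ (.cons _ _)), _, hlen => simp at hlen

lemma hasRainbowCommonNeighbors_congr {c : Sym2 V → α} {c' : Sym2 V → β}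
    (h : ∀ e ∈ G.edgeSet, ∀ f ∈ G.edgeSet, c e = c f ↔ c' e = c' f) :
    G.HasRainbowCommonNeighbors c ↔ G.HasRainbowCommonNeighbors c' :=
  forall₄_congr fun _ _ _ _ => exists_congr fun _ => and_congr_right fun huw =>
    and_congr_right fun hwv => not_congr (h _ huw _ hwv)

lemma hasRainbowCommonNeighbors_iff_of_lt [LinearOrder V] {c : Sym2 V → α} :
    G.HasRainbowCommonNeighbors c ↔
      ∀ u v, u < v → ¬G.Adj u v →
        ∃ w, G.Adj u w ∧ G.Adj w v ∧ c s(u, w) ≠ c s(w, v) := by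
  refine ⟨fun hc u v huv => hc u v huv.ne, fun hc u v huv hadj => ?_⟩
  rcases huv.lt_or_gt with huv | hvu
  · exact hc u v huv hadj
  · obtain ⟨w, hvw, hwu, hne⟩ := hc v u hvu (fun h => hadj h.symm)
    exact ⟨w, hwu.symm, hvw.symm, by simpa [Sym2.eq_swap, eq_comm] using hne⟩

section Product

variable [Fintype V] [LinearOrder V] [DecidableRel G.Adj] {R : Type*} [Field R] [LinearOrder R]
  [IsStrictOrderedRing R]

lemma prod_pathPolynomials_ne_zero_iff (p : Sym2 V → R) :
    (∏ i : V, ∏ j ∈ Finset.univ.filter (fun j => i < j),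
      (if G.Adj i j then (1 : R) else
        ∑ w ∈ Finset.univ.filter (fun w => G.Adj i w ∧ G.Adj w j),
          (p s(i, w) - p s(w, j)) ^ 2)) ≠ 0 ↔ G.HasRainbowCommonNeighbors p := by
  simp only [Finset.prod_ne_zero_iff, Finset.mem_univ, Finset.mem_filter, forall_const, true_and,
    hasRainbowCommonNeighbors_iff_of_lt]
  refine forall₃_congr fun u v _ => ?_
  by_cases hadj : G.Adj u v
  · simp [hadj]
  · simp [hadj, Finset.sum_sq_sub_ne_zero_iff, and_assoc]

end Product

end SimpleGraph

theorem two_rainbow_connectivity_iff_graph_polynomial_nonzero_general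
    (n : ℕ) (G : SimpleGraph (Fin n)) [DecidableRel G.Adj] :
    (∃ c : Sym2 (Fin n) → Fin 2, G.RainbowConnected c) ↔
      ∃ p : Sym2 (Fin n) → ℚ,
        Set.ncard {c : ℚ | ∃ e ∈ G.edgeSet, p e = c} ≤ 2 ∧
        (∏ i : Fin n, ∏ j ∈ Finset.univ.filter (fun j => i < j),
          (if G.Adj i j then (1 : ℚ) else
            ∑ w ∈ Finset.univ.filter (fun w => G.Adj i w ∧ G.Adj w j),
              (p s(i, w) - p s(w, j)) ^ 2)) ≠ 0 := by
  constructor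
  · rintro ⟨c, hc⟩
    let p : Sym2 (Fin n) → ℚ := fun e => ((c e : ℕ) : ℚ)
    refine ⟨p, (Set.ncard_image_comp_le (fun i : Fin 2 => ((i : ℕ) : ℚ)) c G.edgeSet).trans
      (by simp), (G.prod_pathPolynomials_ne_zero_iff p).2 ?_⟩
    exact (SimpleGraph.hasRainbowCommonNeighbors_congr (by simp [p, Fin.val_inj])).1
      (hc.hasRainbowCommonNeighbors (by simp))
  · rintro ⟨p, hcard, hprod⟩
    obtain ⟨c, hc⟩ := Set.exists_eq_iff_eq_of_ncard_image_le_card (α := Fin 2)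
      G.edgeSet.toFinite hcard
    exact ⟨c, ((SimpleGraph.hasRainbowCommonNeighbors_congr hc).2
      ((G.prod_pathPolynomials_ne_zero_iff p).1 hprod)).rainbowConnected⟩

theorem two_rainbow_connectivity_iff_graph_polynomial_nonzero
    (n : ℕ) (G : SimpleGraph (Fin n)) [DecidableRel G.Adj]
    (hdiam : ∀ i j : Fin n, i ≠ j → ¬ G.Adj i j → ∃ w, G.Adj i w ∧ G.Adj w j) :
    (∃ c : Sym2 (Fin n) → Fin 2, G.RainbowConnected c) ↔
      ∃ p : Sym2 (Fin n) → ℚ,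
        Set.ncard {c : ℚ | ∃ e ∈ G.edgeSet, p e = c} ≤ 2 ∧
        (∏ i : Fin n, ∏ j ∈ Finset.univ.filter (fun j => i < j),
          (if G.Adj i j then (1 : ℚ) else
            ∑ w ∈ Finset.univ.filter (fun w => G.Adj i w ∧ G.Adj w j),
              (p s(i, w) - p s(w, j)) ^ 2)) ≠ 0 :=
  two_rainbow_connectivity_iff_graph_polynomial_nonzero_general n G
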